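/- Let N ≥ 1 be an integer and 0 < λ ≤ Λ. There exists exactly one function w : [0, ∞) → ℝ with w ∈ C¹([0, ∞)) ∩ C²((0, ∞)) such that w(0) = 1, w'(0) = 0, and w''(r) = M(−((N−1)/r)·m(w'(r)) − w(r)) for all r > 0 (global existence and uniqueness of the solution to this initial value problem). -/

import Mathlib

noncomputable def Mfun (lam Lam s : ℝ) : ℝ := if 0 < s then s / Lam else s / lam
noncomputable def mfun (lam Lam s : ℝ) : ℝ := if 0 < s then Lam * s else lam * s

noncomputable def D1 (u : ℝ → ℝ) : ℝ → ℝ := derivWithin u (Set.Icc 0 1)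
noncomputable def D2 (u : ℝ → ℝ) : ℝ → ℝ := derivWithin (D1 u) (Set.Ioc 0 1)

/-- A (possibly trivial) solution of the radial eigenvalue problem on the unit ball. -/
def RadialEigen (N : ℕ) (lam Lam μ : ℝ) (v : ℝ → ℝ) : Prop :=
  ContDiffOn ℝ 1 v (Set.Icc 0 1) ∧ ContDiffOn ℝ 2 v (Set.Ioc 0 1) ∧
  (∀ r ∈ Set.Ioc (0:ℝ) 1,
    D2 v r = Mfun lam Lam (-(((N:ℝ) - 1) / r) * mfun lam Lam (D1 v r) - μ * v r)) ∧
  D1 v 0 = 0 ∧ v 1 = 0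

def RadialIVPSol (N : ℕ) (lam Lam : ℝ) (w : ℝ → ℝ) : Prop :=
  ContDiffOn ℝ 1 w (Set.Ici 0) ∧ ContDiffOn ℝ 2 w (Set.Ioi 0) ∧
  w 0 = 1 ∧ derivWithin w (Set.Ici 0) 0 = 0 ∧
  ∀ r ∈ Set.Ioi (0:ℝ),
    deriv (deriv w) r = Mfun lam Lam (-(((N:ℝ) - 1) / r) * mfun lam Lam (deriv w r) - w r)

/-!
Write `p` for `w'`. For a fixed `w`, the first-order problem `p' = M(-((N-1)/t) m(p) - w)`,
`p(0) = 0`, is dissipative: its right-hand side is nonincreasing in `p`, because `M` and `m` are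
nondecreasing and `N ≥ 1`. Hence two solutions never separate, and since `M` is `1/λ`-Lipschitz,
solutions for `w₁` and `w₂` stay within `∫₀ᵗ |w₁ - w₂| / λ` of each other. A solution `P(w)` is
the locally uniform limit of solutions of the problem with `(N-1)/t` cut off to
`(N-1)/max(t, ε)`, which Picard–Lindelöf provides.

The initial value problem is then the fixed-point equation `w = Φw := 1 + ∫₀ʳ P(w)`, and `Φ`
satisfies the Volterra estimate `|Φu - Φv|(r) ≤ (b/λ) ∫₀ʳ |u - v|` on `[0, b]`. Iterating
this estimate gives the factorial bounds `(Kr)ⁿ / n!`, which make the Picard iterates converge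
and force two fixed points to agree.
-/

open Set Filter Topology intervalIntegral

section ScalarComparison

variable {a b : ℝ}

theorem nonpos_of_hasDerivAt_nonpos_of_pos {ψ ψ' : ℝ → ℝ} (hψ : ContinuousOn ψ (Icc a b))
    (ha : ψ a ≤ 0) (hd : ∀ t ∈ Ioo a b, HasDerivAt ψ (ψ' t) t)
    (hψ' : ∀ t ∈ Ioo a b, 0 < ψ t → ψ' t ≤ 0) : ∀ t ∈ Icc a b, ψ t ≤ 0 := by
  intro t ht
  by_contra! hψt
  -- `c` is the last zero of `ψ` before `t`; beyond it `ψ > 0`, so `ψ` decreases on `[c, t]`.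
  set S := Icc a t ∩ ψ ⁻¹' Iic 0
  have hS : IsCompact S := isCompact_Icc.of_isClosed_subset
    ((hψ.mono (Icc_subset_Icc_right ht.2)).preimage_isClosed_of_isClosed isClosed_Icc isClosed_Iic)
    inter_subset_left
  have hcS : sSup S ∈ S := hS.sSup_mem ⟨a, ⟨le_rfl, ht.1⟩, ha⟩
  set c := sSup S
  have hψc : ψ c ≤ 0 := hcS.2
  have hct : c < t := hcS.1.2.lt_of_ne fun h => by rw [h] at hψc; linarith
  have hpos : ∀ s ∈ Ioc c t, 0 < ψ s := fun s hs => by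
    by_contra! hs'
    exact (le_csSup hS.bddAbove ⟨⟨hcS.1.1.trans hs.1.le, hs.2⟩, hs'⟩).not_gt hs.1
  have hsub : Ioo c t ⊆ Ioo a b := Ioo_subset_Ioo hcS.1.1 ht.2
  have hanti : AntitoneOn ψ (Icc c t) := by
    refine antitoneOn_of_hasDerivWithinAt_nonpos (f' := ψ') (convex_Icc c t)
      (hψ.mono (Icc_subset_Icc hcS.1.1 ht.2)) (fun s hs => ?_) fun s hs => ?_
    all_goals rw [interior_Icc] at hs
    · exact (hd s (hsub hs)).hasDerivWithinAt
    · exact hψ' s (hsub hs) (hpos s ⟨hs.1, hs.2.le⟩)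
  linarith [hanti ⟨le_rfl, hct.le⟩ ⟨hct.le, le_rfl⟩ hct.le]

theorem le_abs_add_integral_of_hasDerivAt {q q' g : ℝ → ℝ} (hq : ContinuousOn q (Icc a b))
    (hg : ContinuousOn g (Icc a b)) (hg₀ : ∀ t ∈ Icc a b, 0 ≤ g t)
    (hd : ∀ t ∈ Ioo a b, HasDerivAt q (q' t) t) (hpos : ∀ t ∈ Ioo a b, 0 < q t → q' t ≤ g t) :
    ∀ t ∈ Icc a b, q t ≤ |q a| + ∫ s in a..t, g s := by
  intro t ht
  have hab : a ≤ b := ht.1.trans ht.2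
  have hG₀ : ∀ s ∈ Icc a b, 0 ≤ ∫ u in a..s, g u := fun s hs =>
    integral_nonneg hs.1 fun u hu => hg₀ u ⟨hu.1, hu.2.trans hs.2⟩
  have hG : ContinuousOn (fun s => ∫ u in a..s, g u) (Icc a b) := by
    rw [← uIcc_of_le hab] at hg ⊢
    exact continuousOn_primitive_interval (hg.integrableOn_compact isCompact_uIcc)
  have hGd : ∀ s ∈ Ioo a b, HasDerivAt (fun s => ∫ u in a..s, g u) (g s) s := fun s hs =>
    integral_hasDerivAt_right
      ((hg.mono (Icc_subset_Icc_right hs.2.le)).intervalIntegrable_of_Icc hs.1.le)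
      ((hg.mono Ioo_subset_Icc_self).stronglyMeasurableAtFilter isOpen_Ioo s hs)
      (hg.continuousAt (Icc_mem_nhds hs.1 hs.2))
  have key := nonpos_of_hasDerivAt_nonpos_of_pos (ψ := fun s => q s - |q a| - ∫ u in a..s, g u)
    ((hq.sub continuousOn_const).sub hG) (by simp [le_abs_self])
    (fun s hs => ((hd s hs).sub_const _).sub (hGd s hs))
    (fun s hs hψ => by
      have := hpos s hs (by linarith [hG₀ s (Ioo_subset_Icc_self hs), abs_nonneg (q a)])
      linarith) t ht
  linarith

theorem abs_le_abs_add_integral_of_hasDerivAt {q q' g : ℝ → ℝ} (hq : ContinuousOn q (Icc a b))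
    (hg : ContinuousOn g (Icc a b)) (hg₀ : ∀ t ∈ Icc a b, 0 ≤ g t)
    (hd : ∀ t ∈ Ioo a b, HasDerivAt q (q' t) t) (hpos : ∀ t ∈ Ioo a b, 0 < q t → q' t ≤ g t)
    (hneg : ∀ t ∈ Ioo a b, q t < 0 → -g t ≤ q' t) :
    ∀ t ∈ Icc a b, |q t| ≤ |q a| + ∫ s in a..t, g s := by
  intro t ht
  have hneg' := le_abs_add_integral_of_hasDerivAt (q := fun s => -q s) hq.neg hg hg₀
    (fun s hs => (hd s hs).neg) (fun s hs h => by linarith [hneg s hs (neg_pos.1 h)]) t ht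
  rw [abs_neg] at hneg'
  exact abs_le.2 ⟨by linarith, le_abs_add_integral_of_hasDerivAt hq hg hg₀ hd hpos t ht⟩

end ScalarComparison

theorem exists_forall_hasDerivWithinAt_Icc_of_lipschitz {v : ℝ → ℝ → ℝ} {a b K C : ℝ}
    (hab : a ≤ b) (hlip : ∀ t ∈ Icc a b, ∀ x y, |v t x - v t y| ≤ K * |x - y|)
    (hcont : ∀ x, ContinuousOn (v · x) (Icc a b)) (hbound : ∀ t ∈ Icc a b, ∀ x, |v t x| ≤ C)
    (x₀ : ℝ) :
    ∃ f : ℝ → ℝ, f a = x₀ ∧ ∀ t ∈ Icc a b, HasDerivWithinAt f (v t (f t)) (Icc a b) t := by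
  have hC : 0 ≤ C := (abs_nonneg _).trans (hbound a ⟨le_rfl, hab⟩ 0)
  have hpl : IsPicardLindelof v (tmin := a) (tmax := b) ⟨a, le_rfl, hab⟩ x₀
      (C * (b - a)).toNNReal 0 C.toNNReal K.toNNReal :=
    { lipschitzOnWith := fun t ht => (LipschitzWith.of_dist_le' fun x y => by
          simpa only [Real.dist_eq] using hlip t ht x y).lipschitzOnWith
      continuousOn := fun x _ => hcont x
      norm_le := fun t ht x _ => by
        rw [Real.norm_eq_abs, Real.coe_toNNReal _ hC]
        exact hbound t ht x
      mul_max_le := by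
        have : 0 ≤ C * (b - a) := mul_nonneg hC (sub_nonneg.2 hab)
        simp [Real.coe_toNNReal _ hC, Real.coe_toNNReal _ this, hab] }
  exact hpl.exists_eq_forall_mem_Icc_hasDerivWithinAt₀

section UniformLimits

theorem uniformCauchySeqOn_of_abs_sub_le {f : ℕ → ℝ → ℝ} {s : Set ℝ} {δ : ℕ → ℝ}
    (hδ : Tendsto δ atTop (𝓝 0)) (h : ∀ᶠ n in atTop, ∀ m ≥ n, ∀ x ∈ s, |f n x - f m x| ≤ δ n) :
    UniformCauchySeqOn f atTop s := by
  refine Metric.uniformCauchySeqOn_iff.2 fun ε hε => ?_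
  obtain ⟨n, hn⟩ := eventually_atTop.1 (h.and (hδ.eventually (gt_mem_nhds (half_pos hε))))
  refine ⟨n, fun m hm k hk x hx => ?_⟩
  have hm' := (hn n le_rfl).1 m hm x hx
  have hk' := (hn n le_rfl).1 k hk x hx
  have hδn := (hn n le_rfl).2
  calc dist (f m x) (f k x) ≤ |f n x - f m x| + |f n x - f k x| := by
        rw [Real.dist_eq, abs_sub_comm (f n x)]; exact abs_sub_le _ _ _
    _ < ε := by linarith

theorem exists_tendstoUniformlyOn_Icc {f : ℕ → ℝ → ℝ}
    (h : ∀ b, UniformCauchySeqOn f atTop (Icc 0 b)) :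
    ∃ p : ℝ → ℝ, ∀ b, TendstoUniformlyOn f p atTop (Icc 0 b) :=
  ⟨fun t => limUnder atTop (f · t), fun b => (h b).tendstoUniformlyOn_of_tendsto fun _ ht =>
    ((h b).cauchySeq ht).tendsto_limUnder⟩

theorem continuousOn_Ici_of_forall_Icc {p : ℝ → ℝ} (h : ∀ b, ContinuousOn p (Icc 0 b)) :
    ContinuousOn p (Ici 0) :=
  continuousOn_of_locally_continuousOn fun t _ => ⟨Iio (t + 1), isOpen_Iio, by simp,
    (h (t + 1)).mono fun _ hs => ⟨hs.1, hs.2.le⟩⟩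

theorem tendstoUniformlyOn_comp_of_lipschitz {F : ℕ → ℝ → ℝ} {f : ℝ → ℝ} {s : Set ℝ}
    (h : TendstoUniformlyOn F f atTop s) {g : ℝ → ℝ → ℝ} {K : ℝ}
    (hg : ∀ x ∈ s, ∀ y z, |g x y - g x z| ≤ K * |y - z|) :
    TendstoUniformlyOn (fun n x => g x (F n x)) (fun x => g x (f x)) atTop s := by
  refine Metric.tendstoUniformlyOn_iff.2 fun δ hδ => ?_
  have hK : 0 < |K| + 1 := by positivity
  filter_upwards [Metric.tendstoUniformlyOn_iff.1 h (δ / (|K| + 1)) (div_pos hδ hK)] with n hn x hx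
  have hnx := hn x hx
  rw [Real.dist_eq] at hnx ⊢
  calc |g x (f x) - g x (F n x)| ≤ K * |f x - F n x| := hg x hx _ _
    _ ≤ |K| * (δ / (|K| + 1)) := mul_le_mul (le_abs_self K) hnx.le (abs_nonneg _)
        (abs_nonneg K)
    _ < δ := by rw [mul_div_assoc']; exact (div_lt_iff₀ hK).2 (by nlinarith)

end UniformLimits

theorem continuous_ite_pos {f g : ℝ → ℝ} (hf : Continuous f) (hg : Continuous g)
    (h₀ : f 0 = g 0) : Continuous fun s => if 0 < s then f s else g s :=
  continuous_if (fun a ha => by rwa [(by simpa using frontier_Ioi.subset ha : a = 0)])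
    hf.continuousOn hg.continuousOn

theorem contDiffOn_succ_of_hasDerivAt {f f' : ℝ → ℝ} {s : Set ℝ} {n : ℕ} (hs : IsOpen s)
    (hd : ∀ x ∈ s, HasDerivAt f (f' x) x) (hf' : ContDiffOn ℝ n f' s) :
    ContDiffOn ℝ (n + 1) f s :=
  (contDiffOn_succ_iff_deriv_of_isOpen hs).2
    ⟨fun x hx => (hd x hx).differentiableAt.differentiableWithinAt, by simp,
      hf'.congr fun x hx => (hd x hx).deriv⟩

theorem hasDerivWithinAt_integral_Ici {p : ℝ → ℝ} (hp : ContinuousOn p (Ici 0)) {r : ℝ}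
    (hr : 0 ≤ r) : HasDerivWithinAt (fun x => ∫ s in 0..x, p s) (p r) (Ici 0) r := by
  have hq : Continuous fun s => p (max s 0) :=
    hp.comp_continuous (continuous_id.max continuous_const) fun s => le_max_right s 0
  have hint := integral_hasDerivAt_right (hq.intervalIntegrable 0 r)
    (hq.stronglyMeasurableAtFilter _ _) hq.continuousAt
  rw [max_eq_left hr] at hint
  refine hint.hasDerivWithinAt.congr (fun x hx => integral_congr fun s hs => ?_) ?_
  · rw [uIcc_of_le hx] at hs
    simp [max_eq_left hs.1]
  · exact integral_congr fun s hs => by rw [uIcc_of_le hr] at hs; simp [max_eq_left hs.1]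

section Volterra

open scoped Nat

theorem le_mul_pow_div_factorial_of_le_integral {u : ℕ → ℝ → ℝ} {B K b : ℝ} (hK : 0 ≤ K)
    (hu : ∀ n, ContinuousOn (u n) (Icc 0 b)) (h₀ : ∀ t ∈ Icc 0 b, u 0 t ≤ B)
    (hsucc : ∀ n, ∀ t ∈ Icc 0 b, u (n + 1) t ≤ K * ∫ s in 0..t, u n s) (n : ℕ) :
    ∀ t ∈ Icc 0 b, u n t ≤ B * (K * t) ^ n / n ! := by
  induction n with
  | zero => simpa using h₀
  | succ n ih =>
    intro t ht
    have hint : ∫ s in 0..t, u n s ≤ ∫ s in 0..t, B * K ^ n / n ! * s ^ n :=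
      integral_mono_on ht.1
        (((hu n).mono (Icc_subset_Icc_right ht.2)).intervalIntegrable_of_Icc ht.1)
        (Continuous.intervalIntegrable (by fun_prop) _ _)
        fun s hs => (ih s ⟨hs.1, hs.2.trans ht.2⟩).trans_eq (by ring)
    calc u (n + 1) t ≤ K * ∫ s in 0..t, u n s := hsucc n t ht
      _ ≤ K * ∫ s in 0..t, B * K ^ n / n ! * s ^ n := mul_le_mul_of_nonneg_left hint hK
      _ = B * (K * t) ^ (n + 1) / (n + 1)! := by
        rw [integral_const_mul, integral_pow, Nat.factorial_succ]
        push_cast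
        field_simp
        ring

theorem nonpos_of_le_mul_integral {u : ℝ → ℝ} {K b : ℝ} (hK : 0 ≤ K)
    (hu : ContinuousOn u (Icc 0 b)) (h : ∀ t ∈ Icc 0 b, u t ≤ K * ∫ s in 0..t, u s) :
    ∀ t ∈ Icc 0 b, u t ≤ 0 := by
  obtain ⟨B, hB⟩ := isCompact_Icc.bddAbove_image hu
  intro t ht
  have hlim := (FloorSemiring.tendsto_pow_div_factorial_atTop (K * t)).const_mul B
  rw [mul_zero] at hlim
  refine ge_of_tendsto' hlim fun n => ?_
  rw [← mul_div_assoc]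
  exact le_mul_pow_div_factorial_of_le_integral (u := fun _ => u) hK (fun _ => hu)
    (fun s hs => hB (mem_image_of_mem u hs)) (fun _ => h) n t ht

def IsVolterraLipschitz (Φ : (ℝ → ℝ) → ℝ → ℝ) : Prop :=
  ∀ b, ∃ K, 0 ≤ K ∧ ∀ u v, ContinuousOn u (Ici 0) → ContinuousOn v (Ici 0) →
    ∀ t ∈ Icc 0 b, |Φ u t - Φ v t| ≤ K * ∫ s in 0..t, |u s - v s|

namespace IsVolterraLipschitz

variable {Φ : (ℝ → ℝ) → ℝ → ℝ}

theorem eqOn (hΦ : IsVolterraLipschitz Φ) {u v : ℝ → ℝ} (hu : ContinuousOn u (Ici 0))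
    (hv : ContinuousOn v (Ici 0)) (hΦu : EqOn (Φ u) u (Ici 0)) (hΦv : EqOn (Φ v) v (Ici 0)) :
    EqOn u v (Ici 0) := by
  intro t ht
  obtain ⟨K, hK, hlip⟩ := hΦ t
  have hIcc : Icc 0 t ⊆ Ici 0 := Icc_subset_Ici_self
  have := nonpos_of_le_mul_integral (u := fun s => |u s - v s|) hK ((hu.sub hv).abs.mono hIcc)
    (fun s hs => by simpa only [hΦu (hIcc hs), hΦv (hIcc hs)] using hlip u v hu hv s hs)
    t ⟨ht, le_rfl⟩
  exact sub_eq_zero.1 (abs_nonpos_iff.1 this)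

theorem uniformCauchySeqOn_iterate (hΦ : IsVolterraLipschitz Φ) {u : ℕ → ℝ → ℝ}
    (hu : ∀ n, ContinuousOn (u n) (Ici 0)) (hsucc : ∀ n, u (n + 1) = Φ (u n)) (b : ℝ) :
    UniformCauchySeqOn u atTop (Icc 0 b) := by
  obtain ⟨K, hK, hlip⟩ := hΦ b
  have hIcc : Icc 0 b ⊆ Ici 0 := Icc_subset_Ici_self
  obtain ⟨B, hB⟩ := isCompact_Icc.bddAbove_image (((hu 1).sub (hu 0)).abs.mono hIcc)
  have hd := le_mul_pow_div_factorial_of_le_integral (u := fun n t => |u (n + 1) t - u n t|) hK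
    (fun n => ((hu (n + 1)).sub (hu n)).abs.mono hIcc) (fun t ht => hB (mem_image_of_mem _ ht))
    (fun n t ht => by simpa only [hsucc] using hlip _ _ (hu (n + 1)) (hu n) t ht)
  set c : ℕ → ℝ := fun n => max B 0 * (|K * b| ^ n / n !)
  have hc : Summable c := (Real.summable_pow_div_factorial |K * b|).mul_left _
  have hdc : ∀ n, ∀ t ∈ Icc 0 b, dist (u n t) (u (n + 1) t) ≤ c n := fun n t ht => by
    rw [Real.dist_eq, abs_sub_comm]
    refine (hd n t ht).trans ?_
    rw [mul_div_assoc]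
    exact mul_le_mul (le_max_left _ _) (div_le_div_of_nonneg_right
      (pow_le_pow_left₀ (mul_nonneg hK ht.1)
        ((mul_le_mul_of_nonneg_left ht.2 hK).trans (le_abs_self _)) n)
      (Nat.cast_nonneg _)) (div_nonneg (pow_nonneg (mul_nonneg hK ht.1) n) (Nat.cast_nonneg _))
      (le_max_right _ _)
  refine uniformCauchySeqOn_of_abs_sub_le (tendsto_sum_nat_add c)
    (Eventually.of_forall fun n m hnm t ht => ?_)
  rw [← Real.dist_eq]
  refine (dist_le_Ico_sum_of_dist_le (f := (u · t)) hnm fun _ _ => hdc _ t ht).trans ?_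
  rw [Finset.sum_Ico_eq_sum_range]
  simp_rw [add_comm n]
  exact (hc.comp_injective (add_left_injective n)).sum_le_tsum _ fun _ _ => by positivity

theorem exists_eqOn (hΦ : IsVolterraLipschitz Φ)
    (hcont : ∀ u, ContinuousOn u (Ici 0) → ContinuousOn (Φ u) (Ici 0)) :
    ∃ u, ContinuousOn u (Ici 0) ∧ EqOn (Φ u) u (Ici 0) := by
  set u : ℕ → ℝ → ℝ := fun n => Φ^[n] 0
  have hsucc : ∀ n, u (n + 1) = Φ (u n) := fun n => Function.iterate_succ_apply' Φ n 0
  have hu : ∀ n, ContinuousOn (u n) (Ici 0) := fun n => by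
    induction n with
    | zero => exact continuousOn_const
    | succ n ih => rw [hsucc]; exact hcont _ ih
  obtain ⟨U, hU⟩ := exists_tendstoUniformlyOn_Icc (hΦ.uniformCauchySeqOn_iterate hu hsucc)
  have hUc : ContinuousOn U (Ici 0) := continuousOn_Ici_of_forall_Icc fun b =>
    (hU b).continuousOn (Frequently.of_forall fun n => (hu n).mono Icc_subset_Ici_self)
  refine ⟨U, hUc, fun t ht => ?_⟩
  obtain ⟨K, hK, hlip⟩ := hΦ t
  have hIcc : uIcc 0 t ⊆ Ici 0 := by rw [uIcc_of_le ht]; exact Icc_subset_Ici_self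
  have hdiff : TendstoUniformlyOn (fun n s => |u n s - U s|) (fun _ => 0) atTop (uIcc 0 t) := by
    rw [uIcc_of_le ht]
    refine Metric.tendstoUniformlyOn_iff.2 fun ε hε => ?_
    filter_upwards [Metric.tendstoUniformlyOn_iff.1 (hU t) ε hε] with n hn s hs
    simpa [Real.dist_eq, abs_sub_comm] using hn s hs
  have hint := hdiff.tendsto_intervalIntegral_of_continuousOn (μ := MeasureTheory.volume)
    (Eventually.of_forall fun n => ((hu n).sub hUc).abs.mono hIcc)
  rw [integral_zero] at hint
  have hΦU : Tendsto (fun n => u (n + 1) t) atTop (𝓝 (Φ U t)) := by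
    refine tendsto_iff_dist_tendsto_zero.2 (squeeze_zero (fun _ => dist_nonneg) (fun n => ?_)
      (by simpa using hint.const_mul K))
    rw [Real.dist_eq, hsucc]
    exact hlip _ _ (hu n) hUc t ⟨ht, le_rfl⟩
  exact tendsto_nhds_unique hΦU (((hU t).tendsto_at ⟨ht, le_rfl⟩).comp (tendsto_add_atTop_nat 1))

end IsVolterraLipschitz

end Volterra

section Nonlinearities

variable {lam Lam : ℝ}

theorem Mfun_zero : Mfun lam Lam 0 = 0 := by simp [Mfun]

theorem mfun_zero : mfun lam Lam 0 = 0 := by simp [mfun]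

theorem continuous_Mfun : Continuous (Mfun lam Lam) :=
  continuous_ite_pos (continuous_id.div_const _) (continuous_id.div_const _) (by simp)

theorem continuous_mfun : Continuous (mfun lam Lam) :=
  continuous_ite_pos (continuous_const.mul continuous_id) (continuous_const.mul continuous_id)
    (by simp)

variable (hlam : 0 < lam) (hlL : lam ≤ Lam)
include hlam hlL

theorem Mfun_monotone : Monotone (Mfun lam Lam) := by
  have hLam := hlam.trans_le hlL
  intro a b hab
  unfold Mfun
  split_ifs with ha hb hb
  · exact div_le_div_of_nonneg_right hab hLam.le
  · linarith
  · exact (div_nonpos_of_nonpos_of_nonneg (not_lt.1 ha) hlam.le).trans (div_nonneg hb.le hLam.le)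
  · exact div_le_div_of_nonneg_right hab hlam.le

theorem Mfun_sub_le_of_le {a b : ℝ} (hab : a ≤ b) :
    Mfun lam Lam b - Mfun lam Lam a ≤ (b - a) / lam := by
  unfold Mfun
  split_ifs with hb ha ha
  · rw [← sub_div]
    exact div_le_div_of_nonneg_left (sub_nonneg.2 hab) hlam hlL
  · rw [sub_div]
    linarith [div_le_div_of_nonneg_left hb.le hlam hlL]
  · linarith
  · rw [sub_div]

theorem abs_Mfun_sub_le (a b : ℝ) : |Mfun lam Lam a - Mfun lam Lam b| ≤ |a - b| / lam := by
  wlog hab : b ≤ a generalizing a b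
  · rw [abs_sub_comm, abs_sub_comm a]
    exact this b a (le_of_not_ge hab)
  rw [abs_of_nonneg (sub_nonneg.2 (Mfun_monotone hlam hlL hab)), abs_of_nonneg (sub_nonneg.2 hab)]
  exact Mfun_sub_le_of_le hlam hlL hab

theorem mfun_monotone : Monotone (mfun lam Lam) := by
  have hLam := hlam.trans_le hlL
  intro a b hab
  unfold mfun
  split_ifs with ha hb hb <;> nlinarith

theorem abs_mfun_sub_le (a b : ℝ) : |mfun lam Lam a - mfun lam Lam b| ≤ Lam * |a - b| := by
  wlog hab : b ≤ a generalizing a b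
  · rw [abs_sub_comm, abs_sub_comm a]
    exact this b a (le_of_not_ge hab)
  rw [abs_of_nonneg (sub_nonneg.2 (mfun_monotone hlam hlL hab)), abs_of_nonneg (sub_nonneg.2 hab)]
  unfold mfun
  split_ifs with ha hb hb <;> nlinarith

end Nonlinearities

noncomputable def radialField (N : ℕ) (lam Lam r x p : ℝ) : ℝ :=
  Mfun lam Lam (-(((N : ℝ) - 1) / r) * mfun lam Lam p - x)

section RadialField

variable {N : ℕ} {lam Lam r : ℝ}

theorem radialField_zero : radialField N lam Lam r 0 0 = 0 := by
  simp [radialField, mfun_zero, Mfun_zero]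

theorem continuousOn_radialField {ρ w p : ℝ → ℝ} {s : Set ℝ} (hρ : ContinuousOn ρ s)
    (hρ₀ : ∀ t ∈ s, ρ t ≠ 0) (hw : ContinuousOn w s) (hp : ContinuousOn p s) :
    ContinuousOn (fun t => radialField N lam Lam (ρ t) (w t) (p t)) s :=
  continuous_Mfun.comp_continuousOn
    (((continuousOn_const.div hρ hρ₀).neg.mul (continuous_mfun.comp_continuousOn hp)).sub hw)

variable (hN : 1 ≤ N) (hlam : 0 < lam) (hlL : lam ≤ Lam) (hr : 0 < r)
include hN hr

theorem radialCoeff_nonneg : 0 ≤ ((N : ℝ) - 1) / r :=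
  div_nonneg (sub_nonneg.2 (by exact_mod_cast hN)) hr.le

include hlam hlL

theorem radialField_sub_le {x y p q : ℝ} (hqp : q ≤ p) :
    radialField N lam Lam r x p - radialField N lam Lam r y q ≤ |x - y| / lam := by
  set c := ((N : ℝ) - 1) / r
  set a := -c * mfun lam Lam q - y
  have hm := mul_le_mul_of_nonneg_left (mfun_monotone hlam hlL hqp) (radialCoeff_nonneg hN hr)
  have harg : -c * mfun lam Lam p - x ≤ a + |x - y| := by linarith [neg_abs_le (x - y)]
  calc radialField N lam Lam r x p - radialField N lam Lam r y q
      ≤ Mfun lam Lam (a + |x - y|) - Mfun lam Lam a :=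
        sub_le_sub_right (Mfun_monotone hlam hlL harg) _
    _ ≤ (a + |x - y| - a) / lam :=
        Mfun_sub_le_of_le hlam hlL (le_add_of_nonneg_right (abs_nonneg _))
    _ = |x - y| / lam := by ring_nf

theorem abs_radialField_sub_le (x p q : ℝ) :
    |radialField N lam Lam r x p - radialField N lam Lam r x q| ≤
      ((N : ℝ) - 1) / r * Lam / lam * |p - q| := by
  have hc := radialCoeff_nonneg hN hr
  set c := ((N : ℝ) - 1) / r
  calc |radialField N lam Lam r x p - radialField N lam Lam r x q|
      ≤ |(-c * mfun lam Lam p - x) - (-c * mfun lam Lam q - x)| / lam :=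
        abs_Mfun_sub_le hlam hlL _ _
    _ = c * |mfun lam Lam p - mfun lam Lam q| / lam := by
        rw [show -c * mfun lam Lam p - x - (-c * mfun lam Lam q - x)
          = -(c * (mfun lam Lam p - mfun lam Lam q)) by ring, abs_neg, abs_mul, abs_of_nonneg hc]
    _ ≤ c * (Lam * |p - q|) / lam := by gcongr; exact abs_mfun_sub_le hlam hlL p q
    _ = c * Lam / lam * |p - q| := by ring

theorem abs_radialField_le (x p : ℝ) :
    |radialField N lam Lam r x p| ≤ (((N : ℝ) - 1) / r * Lam * |p| + |x|) / lam := by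
  have hc := radialCoeff_nonneg hN hr
  have hm : |mfun lam Lam p| ≤ Lam * |p| := by
    simpa [mfun_zero] using abs_mfun_sub_le hlam hlL p 0
  have hM := abs_Mfun_sub_le hlam hlL (-(((N : ℝ) - 1) / r) * mfun lam Lam p - x) 0
  rw [Mfun_zero, sub_zero, sub_zero] at hM
  refine hM.trans (div_le_div_of_nonneg_right ((abs_sub _ _).trans ?_) hlam.le)
  rw [abs_mul, abs_neg, abs_of_nonneg hc, mul_assoc]
  gcongr

end RadialField

section SlopeEquation

variable {N : ℕ} {lam Lam : ℝ} {w : ℝ → ℝ}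

structure IsSlopeSol (N : ℕ) (lam Lam : ℝ) (w p : ℝ → ℝ) : Prop where
  continuousOn : ContinuousOn p (Ici 0)
  zero : p 0 = 0
  hasDerivAt : ∀ t > 0, HasDerivAt p (radialField N lam Lam t (w t) (p t)) t

structure IsRegSlopeSol (N : ℕ) (lam Lam : ℝ) (w : ℝ → ℝ) (ε T : ℝ) (f : ℝ → ℝ) : Prop where
  zero : f 0 = 0
  continuousOn : ContinuousOn f (Icc 0 T)
  hasDerivAt : ∀ t ∈ Ioo 0 T, HasDerivAt f (radialField N lam Lam (max t ε) (w t) (f t)) t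

theorem IsRegSlopeSol.mono {ε T T' : ℝ} {f : ℝ → ℝ} (hf : IsRegSlopeSol N lam Lam w ε T f)
    (hT : T' ≤ T) : IsRegSlopeSol N lam Lam w ε T' f :=
  ⟨hf.zero, hf.continuousOn.mono (Icc_subset_Icc_right hT),
    fun t ht => hf.hasDerivAt t ⟨ht.1, ht.2.trans_le hT⟩⟩

variable (hN : 1 ≤ N) (hlam : 0 < lam) (hlL : lam ≤ Lam)
include hN hlam hlL

theorem abs_sub_le_of_hasDerivAt_radialField {ρ w₁ w₂ p₁ p₂ : ℝ → ℝ} {a b : ℝ}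
    (hρ : ∀ t ∈ Ioo a b, 0 < ρ t) (hw₁ : ContinuousOn w₁ (Icc a b))
    (hw₂ : ContinuousOn w₂ (Icc a b)) (hp₁ : ContinuousOn p₁ (Icc a b))
    (hp₂ : ContinuousOn p₂ (Icc a b))
    (hd₁ : ∀ t ∈ Ioo a b, HasDerivAt p₁ (radialField N lam Lam (ρ t) (w₁ t) (p₁ t)) t)
    (hd₂ : ∀ t ∈ Ioo a b, HasDerivAt p₂ (radialField N lam Lam (ρ t) (w₂ t) (p₂ t)) t) :
    ∀ t ∈ Icc a b, |p₁ t - p₂ t| ≤ |p₁ a - p₂ a| + ∫ s in a..t, |w₁ s - w₂ s| / lam :=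
  abs_le_abs_add_integral_of_hasDerivAt (hp₁.sub hp₂) ((hw₁.sub hw₂).abs.div_const lam)
    (fun _ _ => by positivity) (fun t ht => (hd₁ t ht).sub (hd₂ t ht))
    (fun t ht h => radialField_sub_le hN hlam hlL (hρ t ht) (by linarith))
    (fun t ht h => by
      have := radialField_sub_le hN hlam hlL (hρ t ht) (x := w₂ t) (y := w₁ t)
        (show p₁ t ≤ p₂ t by linarith)
      rw [abs_sub_comm] at this
      linarith)

theorem IsSlopeSol.abs_sub_le {w₁ w₂ p₁ p₂ : ℝ → ℝ} (h₁ : IsSlopeSol N lam Lam w₁ p₁)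
    (h₂ : IsSlopeSol N lam Lam w₂ p₂) (hw₁ : ContinuousOn w₁ (Ici 0))
    (hw₂ : ContinuousOn w₂ (Ici 0)) {t : ℝ} (ht : 0 ≤ t) :
    |p₁ t - p₂ t| ≤ ∫ s in 0..t, |w₁ s - w₂ s| / lam := by
  simpa [h₁.zero, h₂.zero] using abs_sub_le_of_hasDerivAt_radialField hN hlam hlL (ρ := id)
    (fun s hs => hs.1) (hw₁.mono Icc_subset_Ici_self) (hw₂.mono Icc_subset_Ici_self)
    (h₁.continuousOn.mono Icc_subset_Ici_self) (h₂.continuousOn.mono Icc_subset_Ici_self)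
    (fun s hs => h₁.hasDerivAt s hs.1) (fun s hs => h₂.hasDerivAt s hs.1) t ⟨ht, le_rfl⟩

theorem IsRegSlopeSol.abs_le {ε T : ℝ} {f : ℝ → ℝ} (hf : IsRegSlopeSol N lam Lam w ε T f)
    (hε : 0 < ε) (hw : ContinuousOn w (Icc 0 T)) :
    ∀ t ∈ Icc 0 T, |f t| ≤ ∫ s in 0..t, |w s| / lam := by
  simpa [hf.zero] using abs_sub_le_of_hasDerivAt_radialField hN hlam hlL (ρ := (max · ε))
    (w₂ := 0) (p₂ := 0) (fun t _ => hε.trans_le (le_max_right _ _)) hw continuousOn_const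
    hf.continuousOn continuousOn_const hf.hasDerivAt
    (fun t _ => by simp [radialField_zero])

theorem IsRegSlopeSol.abs_sub_le {ε₁ ε₂ T : ℝ} {f₁ f₂ : ℝ → ℝ}
    (hf₁ : IsRegSlopeSol N lam Lam w ε₁ T f₁) (hf₂ : IsRegSlopeSol N lam Lam w ε₂ T f₂)
    (hε₂ : 0 < ε₂) (hε : ε₂ ≤ ε₁) (hε₁T : ε₁ ≤ T) (hw : ContinuousOn w (Icc 0 T)) :
    ∀ t ∈ Icc 0 T, |f₁ t - f₂ t| ≤ 2 * ∫ s in 0..ε₁, |w s| / lam := by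
  have hsmall : ∀ t ∈ Icc 0 ε₁, |f₁ t - f₂ t| ≤ 2 * ∫ s in 0..ε₁, |w s| / lam := by
    intro t ht
    have htT : t ∈ Icc 0 T := ⟨ht.1, ht.2.trans hε₁T⟩
    have hI : ∫ s in 0..t, |w s| / lam ≤ ∫ s in 0..ε₁, |w s| / lam :=
      integral_mono_interval le_rfl ht.1 ht.2 (Eventually.of_forall fun _ => by positivity)
        ((hw.mono (Icc_subset_Icc_right hε₁T)).abs.div_const lam |>.intervalIntegrable_of_Icc
          (ht.1.trans ht.2))
    linarith [abs_sub (f₁ t) (f₂ t), hf₁.abs_le hN hlam hlL (hε₂.trans_le hε) hw t htT,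
      hf₂.abs_le hN hlam hlL hε₂ hw t htT]
  intro t ht
  rcases le_total t ε₁ with h | h
  · exact hsmall t ⟨ht.1, h⟩
  -- beyond `ε₁` both solve the same equation, whose solutions do not separate
  have hsub : Icc ε₁ T ⊆ Icc 0 T := Icc_subset_Icc_left (hε₂.le.trans hε)
  have hpos : ∀ s ∈ Ioo ε₁ T, s ∈ Ioo 0 T := fun s hs => ⟨hε₂.trans_le (hε.trans hs.1.le), hs.2⟩
  have key := abs_sub_le_of_hasDerivAt_radialField hN hlam hlL (ρ := id) (fun s hs => (hpos s hs).1)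
    (hw.mono hsub) (hw.mono hsub) (hf₁.continuousOn.mono hsub) (hf₂.continuousOn.mono hsub)
    (fun s hs => by simpa [max_eq_left hs.1.le] using hf₁.hasDerivAt s (hpos s hs))
    (fun s hs => by simpa [max_eq_left (hε.trans hs.1.le)] using hf₂.hasDerivAt s (hpos s hs))
    t ⟨h, ht.2⟩
  simp only [sub_self, abs_zero, zero_div, integral_zero, add_zero] at key
  exact key.trans (hsmall ε₁ ⟨hε₂.le.trans hε, le_rfl⟩)

end SlopeEquation

section SlopeExistence

variable {N : ℕ} {lam Lam : ℝ} {w : ℝ → ℝ} (hN : 1 ≤ N) (hlam : 0 < lam) (hlL : lam ≤ Lam)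
include hN hlam hlL

theorem exists_hasDerivAt_radialField_projIcc {ε T B : ℝ} (hε : 0 < ε) (hT : 0 ≤ T)
    (hB : -B ≤ B) (hw : ContinuousOn w (Icc 0 T)) :
    ∃ f : ℝ → ℝ, f 0 = 0 ∧ ContinuousOn f (Icc 0 T) ∧ ∀ t ∈ Ioo 0 T,
      HasDerivAt f (radialField N lam Lam (max t ε) (w t) (projIcc (-B) B hB (f t))) t := by
  have hLam := hlam.trans_le hlL
  have hρ : ∀ t, 0 < max t ε := fun t => hε.trans_le (le_max_right _ _)
  have hcoeff : ∀ t, ((N : ℝ) - 1) / max t ε * Lam ≤ ((N : ℝ) - 1) / ε * Lam := fun t =>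
    mul_le_mul_of_nonneg_right (div_le_div_of_nonneg_left (sub_nonneg.2 (by exact_mod_cast hN))
      hε (le_max_right _ _)) hLam.le
  have hcoeff₀ : 0 ≤ ((N : ℝ) - 1) / ε * Lam := mul_nonneg (radialCoeff_nonneg hN hε) hLam.le
  obtain ⟨Cw, hCw⟩ := isCompact_Icc.exists_bound_of_continuousOn hw
  obtain ⟨f, hf₀, hf⟩ := exists_forall_hasDerivWithinAt_Icc_of_lipschitz
    (v := fun t x => radialField N lam Lam (max t ε) (w t) (projIcc (-B) B hB x)) hT
    (K := ((N : ℝ) - 1) / ε * Lam / lam) (C := (((N : ℝ) - 1) / ε * Lam * B + Cw) / lam)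
    (fun t _ x y => (abs_radialField_sub_le hN hlam hlL (hρ t) _ _ _).trans <|
      mul_le_mul (div_le_div_of_nonneg_right (hcoeff t) hlam.le) (abs_projIcc_sub_projIcc _)
        (abs_nonneg _) (div_nonneg hcoeff₀ hlam.le))
    (fun x => continuousOn_radialField (continuous_id.max continuous_const).continuousOn
      (fun t _ => (hρ t).ne') hw continuousOn_const)
    (fun t ht x => (abs_radialField_le hN hlam hlL (hρ t) _ _).trans <|
      div_le_div_of_nonneg_right (add_le_add (mul_le_mul (hcoeff t)
        (abs_le.2 (projIcc (-B) B hB x).2) (abs_nonneg _) hcoeff₀) (by simpa using hCw t ht))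
        hlam.le) 0
  exact ⟨f, hf₀, fun t ht => (hf t ht).continuousWithinAt,
    fun t ht => (hf t (Ioo_subset_Icc_self ht)).hasDerivAt (Icc_mem_nhds ht.1 ht.2)⟩

theorem exists_isRegSlopeSol {ε T : ℝ} (hε : 0 < ε) (hT : 0 ≤ T)
    (hw : ContinuousOn w (Icc 0 T)) : ∃ f, IsRegSlopeSol N lam Lam w ε T f := by
  have hρ : ∀ t, 0 < max t ε := fun t => hε.trans_le (le_max_right _ _)
  -- Picard–Lindelöf applies once `p` is clamped to `[-(I + 1), I + 1]`; the a priori bound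
  -- `|f t| ≤ ∫₀ᵗ |w| / λ ≤ I` then shows that the clamp is never active.
  set I := ∫ s in 0..T, |w s| / lam
  have hI : 0 ≤ I := integral_nonneg hT fun s _ => by positivity
  have hB : -(I + 1) ≤ I + 1 := by linarith
  set clamp := fun x => (projIcc (-(I + 1)) (I + 1) hB x : ℝ)
  have hclamp₀ : clamp 0 = 0 := by
    simp [clamp, projIcc_of_mem _
      (show (0 : ℝ) ∈ Icc (-(I + 1)) (I + 1) by constructor <;> linarith)]
  have hclamp_mono : Monotone clamp := fun x y hxy => monotone_projIcc _ hxy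
  obtain ⟨f, hf₀, hfc, hfd⟩ := exists_hasDerivAt_radialField_projIcc hN hlam hlL hε hT hB hw
  have hbound := abs_le_abs_add_integral_of_hasDerivAt hfc (hw.abs.div_const lam)
    (fun _ _ => by positivity) hfd
    (fun t _ h => by
      simpa [radialField_zero] using radialField_sub_le hN hlam hlL (hρ t) (y := 0) (q := 0)
        (hclamp₀ ▸ hclamp_mono h.le))
    (fun t _ h => by
      have := radialField_sub_le hN hlam hlL (hρ t) (x := 0) (p := 0) (y := w t)
        (hclamp₀ ▸ hclamp_mono h.le)
      simp only [radialField_zero, zero_sub, abs_neg] at this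
      linarith)
  refine ⟨f, hf₀, hfc, fun t ht => ?_⟩
  have hft : |f t| ≤ I := by
    have h := hbound t (Ioo_subset_Icc_self ht)
    rw [hf₀, abs_zero, zero_add] at h
    exact h.trans (integral_mono_interval le_rfl ht.1.le ht.2.le
      (Eventually.of_forall fun _ => by positivity)
      ((hw.abs.div_const lam).intervalIntegrable_of_Icc hT))
  have hfdt := hfd t ht
  rwa [projIcc_of_mem _ (abs_le.1 (hft.trans (show I ≤ I + 1 by linarith)))] at hfdt

theorem isSlopeSol_of_tendstoUniformlyOn {ε T : ℕ → ℝ} {f : ℕ → ℝ → ℝ} {p : ℝ → ℝ}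
    (hf : ∀ n, IsRegSlopeSol N lam Lam w (ε n) (T n) (f n)) (hε : Tendsto ε atTop (𝓝 0))
    (hT : Tendsto T atTop atTop) (hp : ∀ b, TendstoUniformlyOn f p atTop (Icc 0 b)) :
    IsSlopeSol N lam Lam w p := by
  refine ⟨continuousOn_Ici_of_forall_Icc fun b => (hp b).continuousOn ?_, ?_, fun t ht => ?_⟩
  · exact ((hT.eventually_ge_atTop b).mono fun n hn =>
      (hf n).continuousOn.mono (Icc_subset_Icc_right hn)).frequently
  · exact tendsto_nhds_unique ((hp 0).tendsto_at ⟨le_rfl, le_rfl⟩) (by simp [(hf _).zero])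
  -- on `(t/2, t+1)` the cut-off is eventually inactive and the fields converge uniformly
  have hsub : Ioo (t / 2) (t + 1) ⊆ Icc 0 (t + 1) := fun s hs => ⟨by linarith [hs.1], hs.2.le⟩
  have hsmall : ∀ᶠ n in atTop, ε n ≤ t / 2 := hε.eventually (ge_mem_nhds (half_pos ht))
  refine hasDerivAt_of_tendstoUniformlyOn (f := f) isOpen_Ioo
    (f' := fun n s => radialField N lam Lam (max s (ε n)) (w s) (f n s))
    (g' := fun s => radialField N lam Lam s (w s) (p s)) ?_ ?_
    (fun s hs => (hp (t + 1)).tendsto_at (hsub hs))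
    (show t ∈ Ioo (t / 2) (t + 1) by constructor <;> linarith)
  · refine (tendstoUniformlyOn_comp_of_lipschitz ((hp (t + 1)).mono hsub)
      (K := ((N : ℝ) - 1) / (t / 2) * Lam / lam) fun s hs x y => ?_).congr ?_
    · refine (abs_radialField_sub_le hN hlam hlL (half_pos ht |>.trans hs.1) (w s) x y).trans ?_
      have hc : (0 : ℝ) ≤ N - 1 := sub_nonneg.2 (by exact_mod_cast hN)
      gcongr
      all_goals first | exact hc | exact hs.1.le | linarith
    · filter_upwards [hsmall] with n hn s hs
      simp only [max_eq_left (hn.trans hs.1.le)]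
  · filter_upwards [hsmall, hT.eventually_ge_atTop (t + 1)] with n hn hnT s hs
    exact (hf n).hasDerivAt s ⟨by linarith [hs.1], hs.2.trans_le hnT⟩

theorem exists_isSlopeSol (hw : ContinuousOn w (Ici 0)) : ∃ p, IsSlopeSol N lam Lam w p := by
  set ε : ℕ → ℝ := fun n => 1 / ((n : ℝ) + 1)
  have hε : ∀ n, 0 < ε n := fun n => by positivity
  have hε_lim : Tendsto ε atTop (𝓝 0) := tendsto_one_div_add_atTop_nhds_zero_nat
  have hT : Tendsto (fun n : ℕ => (n : ℝ) + 1) atTop atTop :=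
    tendsto_atTop_add_const_right _ 1 tendsto_natCast_atTop_atTop
  have hεT : ∀ n, ε n ≤ n + 1 := fun n => ((div_le_one (by positivity)).2
    (le_add_of_nonneg_left n.cast_nonneg)).trans (le_add_of_nonneg_left n.cast_nonneg)
  have hwT : ∀ T, ContinuousOn w (Icc 0 T) := fun T => hw.mono Icc_subset_Ici_self
  choose f hf using fun n : ℕ => exists_isRegSlopeSol hN hlam hlL (hε n) (T := n + 1)
    (by positivity) (hwT _)
  have hη : Tendsto (fun n => 2 * ∫ s in 0..ε n, |w s| / lam) atTop (𝓝 0) := by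
    have hprim := (hasDerivWithinAt_integral_Ici (hw.abs.div_const lam) le_rfl).continuousWithinAt
    have := (hprim.tendsto.comp (tendsto_nhdsWithin_iff.2
      ⟨hε_lim, Eventually.of_forall fun n => (hε n).le⟩)).const_mul 2
    rwa [integral_same, mul_zero] at this
  have hcauchy : ∀ b, UniformCauchySeqOn f atTop (Icc 0 b) := fun b =>
    uniformCauchySeqOn_of_abs_sub_le hη <| (hT.eventually_ge_atTop b).mono fun n hn m hnm t ht =>
      (hf n).abs_sub_le hN hlam hlL ((hf m).mono (by gcongr)) (hε m)
        (one_div_le_one_div_of_le (by positivity) (by gcongr)) (hεT n) (hwT _) t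
        ⟨ht.1, ht.2.trans hn⟩
  obtain ⟨p, hp⟩ := exists_tendstoUniformlyOn_Icc hcauchy
  exact ⟨p, isSlopeSol_of_tendstoUniformlyOn hN hlam hlL hf hε_lim hT hp⟩

end SlopeExistence

section RadialIVP

variable {N : ℕ} {lam Lam : ℝ} {w : ℝ → ℝ}

open Classical in
noncomputable def radialSlope (N : ℕ) (lam Lam : ℝ) (w : ℝ → ℝ) : ℝ → ℝ :=
  if h : ∃ p, IsSlopeSol N lam Lam w p then h.choose else 0

noncomputable def radialPicard (N : ℕ) (lam Lam : ℝ) (w : ℝ → ℝ) (r : ℝ) : ℝ :=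
  1 + ∫ s in 0..r, radialSlope N lam Lam w s

theorem RadialIVPSol.isSlopeSol (hw : RadialIVPSol N lam Lam w) :
    IsSlopeSol N lam Lam w (derivWithin w (Ici 0)) := by
  obtain ⟨hC1, hC2, -, hw'0, hode⟩ := hw
  refine ⟨hC1.continuousOn_derivWithin (uniqueDiffOn_Ici 0) le_rfl, hw'0, fun t ht => ?_⟩
  have hC2' : ContDiffOn ℝ 1 (deriv w) (Ioi 0) :=
    ((contDiffOn_succ_iff_deriv_of_isOpen isOpen_Ioi).1 (by rwa [one_add_one_eq_two])).2.2
  have hd : HasDerivAt (deriv w) (deriv (deriv w) t) t :=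
    ((hC2'.differentiableOn one_ne_zero) t ht |>.differentiableAt (Ioi_mem_nhds ht)).hasDerivAt
  have heq : derivWithin w (Ici 0) =ᶠ[𝓝 t] deriv w := by
    filter_upwards [Ioi_mem_nhds ht] with x hx using derivWithin_of_mem_nhds (Ici_mem_nhds hx)
  rw [heq.eq_of_nhds]
  exact (hode t ht ▸ hd).congr_of_eventuallyEq heq

theorem RadialIVPSol.eq_one_add_integral (hw : RadialIVPSol N lam Lam w) {r : ℝ} (hr : 0 ≤ r) :
    w r = 1 + ∫ s in 0..r, derivWithin w (Ici 0) s := by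
  rw [integral_eq_sub_of_hasDeriv_right_of_le hr (hw.1.continuousOn.mono Icc_subset_Ici_self)
    (fun x hx => ((hw.1.differentiableOn one_ne_zero x hx.1.le).hasDerivWithinAt.hasDerivAt
      (Ici_mem_nhds hx.1)).hasDerivWithinAt)
    ((hw.isSlopeSol.continuousOn.mono Icc_subset_Ici_self).intervalIntegrable_of_Icc hr),
    hw.2.2.1]
  ring

variable (hN : 1 ≤ N) (hlam : 0 < lam) (hlL : lam ≤ Lam)
include hN hlam hlL

theorem isSlopeSol_radialSlope (hw : ContinuousOn w (Ici 0)) :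
    IsSlopeSol N lam Lam w (radialSlope N lam Lam w) := by
  have h := exists_isSlopeSol hN hlam hlL hw
  rw [radialSlope, dif_pos h]
  exact h.choose_spec

theorem continuousOn_radialPicard (hw : ContinuousOn w (Ici 0)) :
    ContinuousOn (radialPicard N lam Lam w) (Ici 0) := fun _ hr =>
  ((hasDerivWithinAt_integral_Ici (isSlopeSol_radialSlope hN hlam hlL hw).continuousOn hr)
    |>.continuousWithinAt).const_add 1

theorem isVolterraLipschitz_radialPicard : IsVolterraLipschitz (radialPicard N lam Lam) := by
  intro b
  refine ⟨|b| / lam, by positivity, fun u v hu hv t ht => ?_⟩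
  have hPu := isSlopeSol_radialSlope hN hlam hlL hu
  have hPv := isSlopeSol_radialSlope hN hlam hlL hv
  have hIcc : Icc 0 t ⊆ Ici 0 := Icc_subset_Ici_self
  have hint : ∀ s ∈ uIoc 0 t, ‖radialSlope N lam Lam u s - radialSlope N lam Lam v s‖ ≤
      ∫ s in 0..t, |u s - v s| / lam := fun s hs => by
    rw [uIoc_of_le ht.1] at hs
    exact (hPu.abs_sub_le hN hlam hlL hPv hu hv hs.1.le).trans <| integral_mono_interval le_rfl
      hs.1.le hs.2 (Eventually.of_forall fun _ => by positivity)
      (((hu.sub hv).abs.div_const lam).mono hIcc |>.intervalIntegrable_of_Icc ht.1)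
  calc |radialPicard N lam Lam u t - radialPicard N lam Lam v t|
      = ‖∫ s in 0..t, (radialSlope N lam Lam u s - radialSlope N lam Lam v s)‖ := by
        rw [integral_sub ((hPu.continuousOn.mono hIcc).intervalIntegrable_of_Icc ht.1)
          ((hPv.continuousOn.mono hIcc).intervalIntegrable_of_Icc ht.1), radialPicard,
          radialPicard, Real.norm_eq_abs, add_sub_add_left_eq_sub]
    _ ≤ (∫ s in 0..t, |u s - v s| / lam) * |t - 0| := norm_integral_le_of_norm_le_const hint
    _ = |t| / lam * ∫ s in 0..t, |u s - v s| := by rw [integral_div, sub_zero]; ring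
    _ ≤ |b| / lam * ∫ s in 0..t, |u s - v s| := by
        gcongr
        · exact integral_nonneg ht.1 fun _ _ => abs_nonneg _
        exacts [ht.1, ht.2]

theorem RadialIVPSol.eqOn_radialPicard (hw : RadialIVPSol N lam Lam w) :
    EqOn (radialPicard N lam Lam w) w (Ici 0) := by
  intro r hr
  have hwc : ContinuousOn w (Ici 0) := hw.1.continuousOn
  have hP := isSlopeSol_radialSlope hN hlam hlL hwc
  have hp := hw.isSlopeSol
  rw [hw.eq_one_add_integral hr, radialPicard]
  congr 1
  refine integral_congr fun s hs => ?_
  rw [uIcc_of_le hr] at hs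
  simpa [sub_eq_zero] using hP.abs_sub_le hN hlam hlL hp hwc hwc hs.1

theorem radialIVPSol_of_eqOn (hw : ContinuousOn w (Ici 0))
    (hfix : EqOn (radialPicard N lam Lam w) w (Ici 0)) : RadialIVPSol N lam Lam w := by
  have hP := isSlopeSol_radialSlope hN hlam hlL hw
  set P := radialSlope N lam Lam w
  have hderiv : ∀ r ∈ Ici (0 : ℝ), HasDerivWithinAt w (P r) (Ici 0) r := fun r hr =>
    ((hasDerivWithinAt_integral_Ici hP.continuousOn hr).const_add 1).congr
      (fun x hx => (hfix hx).symm) (hfix hr).symm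
  have hderivAt : ∀ r ∈ Ioi (0 : ℝ), HasDerivAt w (P r) r := fun r hr =>
    (hderiv r (Ioi_subset_Ici_self hr)).hasDerivAt (Ici_mem_nhds hr)
  have hPc : ContDiffOn ℝ 1 P (Ioi 0) := by
    simpa using contDiffOn_succ_of_hasDerivAt (n := 0) isOpen_Ioi hP.hasDerivAt <|
      contDiffOn_zero.2 <| continuousOn_radialField continuousOn_id (fun r hr => (ne_of_gt hr))
        (hw.mono Ioi_subset_Ici_self) (hP.continuousOn.mono Ioi_subset_Ici_self)
  have hdw : ∀ r ∈ Ici (0 : ℝ), derivWithin w (Ici 0) r = P r := fun r hr =>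
    (hderiv r hr).derivWithin (uniqueDiffOn_Ici 0 r hr)
  refine ⟨?_, ?_, ?_, ?_, fun r hr => ?_⟩
  · exact (contDiffOn_succ_iff_derivWithin (n := 0) (uniqueDiffOn_Ici 0)).2
      ⟨fun r hr => (hderiv r hr).differentiableWithinAt, by simp,
        contDiffOn_zero.2 (hP.continuousOn.congr hdw)⟩
  · simpa [one_add_one_eq_two] using contDiffOn_succ_of_hasDerivAt (n := 1) isOpen_Ioi hderivAt hPc
  · rw [← hfix self_mem_Ici]
    simp [radialPicard]
  · rw [hdw 0 self_mem_Ici, hP.zero]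
  · have heq : deriv w =ᶠ[𝓝 r] P := by
      filter_upwards [Ioi_mem_nhds hr] with x hx using (hderivAt x hx).deriv
    rw [heq.deriv_eq, (hP.hasDerivAt r hr).deriv, ← (hderivAt r hr).deriv]
    rfl

end RadialIVP

/-- global existence and uniqueness (on `[0,∞)`) of the solution of
the radial initial value problem `w'' = M(-((N-1)/r) m(w') - w)`, `w(0)=1`, `w'(0)=0`. -/
theorem stmt_13 (N : ℕ) (hN : 1 ≤ N) (lam Lam : ℝ) (hlam : 0 < lam) (hlL : lam ≤ Lam) :
    (∃ w : ℝ → ℝ, RadialIVPSol N lam Lam w) ∧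
    ∀ w v : ℝ → ℝ, RadialIVPSol N lam Lam w → RadialIVPSol N lam Lam v →
      ∀ r ∈ Set.Ici (0:ℝ), w r = v r := by
  have hΦ := isVolterraLipschitz_radialPicard hN hlam hlL
  obtain ⟨w, hw, hfix⟩ := hΦ.exists_eqOn fun u hu => continuousOn_radialPicard hN hlam hlL hu
  exact ⟨⟨w, radialIVPSol_of_eqOn hN hlam hlL hw hfix⟩, fun w v hw hv =>
    hΦ.eqOn hw.1.continuousOn hv.1.continuousOn (hw.eqOn_radialPicard hN hlam hlL)
      (hv.eqOn_radialPicard hN hlam hlL)⟩
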